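/- Let X and Y be real Hilbert spaces, U ⊆ X open, φ : U → Y a map, x₀ ∈ U and R > 0. Assume that for every y ∈ Y the real-valued map x ↦ ⟨φ(x), y⟩_Y admits a power series representation around x₀ with radius of convergence at least R. Then φ itself admits a power series representation around x₀ (as a series Σ_k Q_k(x−x₀) of continuous Y-valued homogeneous polynomials) with radius of convergence at least R. -/

import Mathlib

open Filter
open scoped Topology NNReal ENNReal

universe u v

section Helpers

variable {X : Type u} [NormedAddCommGroup X] [NormedSpace ℝ X]

lemma mlnorm_le_of_unit {k : ℕ} {G : Type*} [NormedAddCommGroup G] [NormedSpace ℝ G]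
    (f : ContinuousMultilinearMap ℝ (fun _ : Fin k => X) G) {C : ℝ} (hC : 0 ≤ C)
    (H : ∀ v : Fin k → X, (∀ i, ‖v i‖ ≤ 1) → ‖f v‖ ≤ C) : ‖f‖ ≤ C := by
  refine f.opNorm_le_bound hC fun m => ?_
  by_cases hm : ∃ i, m i = 0
  · obtain ⟨i, hi⟩ := hm
    rw [f.map_coord_zero i hi, norm_zero]
    exact mul_nonneg hC (Finset.prod_nonneg fun i _ => norm_nonneg _)
  · push_neg at hm
    set v : Fin k → X := fun i => ‖m i‖⁻¹ • m i with hv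
    have hv1 : ∀ i, ‖v i‖ ≤ 1 := by
      intro i
      rw [hv]
      simp only [norm_smul, norm_inv, norm_norm]
      rw [inv_mul_cancel₀ (norm_ne_zero_iff.2 (hm i))]
    have hfm : f m = (∏ i, ‖m i‖) • f v := by
      have h2 : (fun i => ‖m i‖ • v i) = m := by
        funext i
        rw [hv]
        simp only [smul_smul]
        rw [mul_inv_cancel₀ (norm_ne_zero_iff.2 (hm i)), one_smul]
      rw [← f.map_smul_univ, h2]
    rw [hfm, norm_smul, Real.norm_eq_abs,
      abs_of_nonneg (Finset.prod_nonneg fun i _ => norm_nonneg (m i)), mul_comm C]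
    exact mul_le_mul_of_nonneg_left (H v hv1)
      (Finset.prod_nonneg fun i _ => norm_nonneg (m i))

lemma derivSeries_norm_le {F : Type v} [NormedAddCommGroup F] [NormedSpace ℝ F]
    (p : FormalMultilinearSeries ℝ X F) (k : ℕ) :
    ‖p.derivSeries k‖ ≤ (k + 1) * ‖p (k + 1)‖ := by
  have h1 : ‖p.derivSeries k‖ ≤ ‖p.changeOriginSeries 1 k‖ := by
    apply (ContinuousLinearMap.norm_compContinuousMultilinearMap_le _ _).trans
    apply mul_le_of_le_one_left (norm_nonneg _)
    exact ContinuousLinearMap.opNorm_le_bound _ zero_le_one (by simp)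
  refine h1.trans ?_
  have h2 : ‖p.changeOriginSeries 1 k‖₊ ≤
      ∑' _ : { s : Finset (Fin (1 + k)) // s.card = k }, ‖p (1 + k)‖₊ :=
    p.nnnorm_changeOriginSeries_le_tsum 1 k
  have h3 : (∑' _ : { s : Finset (Fin (1 + k)) // s.card = k }, ‖p (1 + k)‖₊)
      = (k + 1) * ‖p (1 + k)‖₊ := by
    rw [tsum_fintype, Finset.sum_const, nsmul_eq_mul]
    congr 1
    have hcard : Fintype.card { s : Finset (Fin (1 + k)) // s.card = k } = k + 1 := by
      rw [Fintype.card_finset_len, Fintype.card_fin, add_comm 1 k, Nat.choose_succ_self_right]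
    rw [Finset.card_univ, hcard]
    push_cast
    ring
  have h4 : ‖p.changeOriginSeries 1 k‖ ≤ (k + 1) * ‖p (1 + k)‖ := by
    have := h2.trans_eq h3
    exact_mod_cast this
  refine h4.trans ?_
  rw [add_comm 1 k]

private lemma cauchy_aux {x : X} {r : ℝ≥0∞} :
    ∀ (k : ℕ) {F : Type (max u v)} [NormedAddCommGroup F] [NormedSpace ℝ F] [CompleteSpace F]
      {f : X → F} {p : FormalMultilinearSeries ℝ X F},
      HasFPowerSeriesOnBall f p x r →
      ‖iteratedFDeriv ℝ k f x‖ ≤ k.factorial * ‖p k‖ := by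
  intro k
  induction k with
  | zero =>
    intro F _ _ _ f p h
    rw [h.iteratedFDeriv_zero_apply_diag]
    simp
  | succ k ih =>
    intro F _ _ _ f p h
    rw [← norm_iteratedFDeriv_fderiv]
    calc ‖iteratedFDeriv ℝ k (fderiv ℝ f) x‖ ≤ k.factorial * ‖p.derivSeries k‖ := ih h.fderiv
      _ ≤ k.factorial * ((k + 1) * ‖p (k + 1)‖) := by
          have := derivSeries_norm_le p k
          gcongr
      _ = (k + 1).factorial * ‖p (k + 1)‖ := by
          rw [Nat.factorial_succ]
          push_cast
          ring

lemma cauchy_bound {F : Type v} [NormedAddCommGroup F] [NormedSpace ℝ F] [CompleteSpace F]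
    {x : X} {r : ℝ≥0∞} {f : X → F} {p : FormalMultilinearSeries ℝ X F}
    (h : HasFPowerSeriesOnBall f p x r) (k : ℕ) :
    ‖iteratedFDeriv ℝ k f x‖ ≤ k.factorial * ‖p k‖ := by
  cases k with
  | zero =>
    rw [h.iteratedFDeriv_zero_apply_diag]
    simp
  | succ k =>
    rw [← norm_iteratedFDeriv_fderiv]
    calc ‖iteratedFDeriv ℝ k (fderiv ℝ f) x‖ ≤ k.factorial * ‖p.derivSeries k‖ :=
          cauchy_aux k h.fderiv
      _ ≤ k.factorial * ((k + 1) * ‖p (k + 1)‖) := by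
          have := derivSeries_norm_le p k
          gcongr
      _ = (k + 1).factorial * ‖p (k + 1)‖ := by
          rw [Nat.factorial_succ]
          push_cast
          ring

end Helpers


/-- **Proposition A.4.** Let `X` and `Y` be real Hilbert spaces, `U ⊆ X` open,
`φ : U → Y`, `x₀ ∈ U` and `R > 0`. If for every `y ∈ Y` the map `x ↦ ⟨φ(x), y⟩_Y`
admits a power series representation around `x₀` with radius of convergence at least
`R`, then `φ` admits a power series representation around `x₀` (a series of continuous
`Y`-valued homogeneous polynomials) with radius of convergence at least `R`. -/
theorem weakly_analytic_implies_analytic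
    {X Y : Type*} [NormedAddCommGroup X] [InnerProductSpace ℝ X] [CompleteSpace X]
    [NormedAddCommGroup Y] [InnerProductSpace ℝ Y] [CompleteSpace Y]
    (U : Set X) (hU : IsOpen U) (φ : X → Y) (x₀ : X) (hx₀ : x₀ ∈ U)
    (R : ℝ) (hR : 0 < R)
    (hweak : ∀ y : Y, ∃ p : FormalMultilinearSeries ℝ X ℝ,
      ENNReal.ofReal R ≤ p.radius ∧
      ∀ h : X, ‖h‖ < R → x₀ + h ∈ U →
        HasSum (fun k => p k (fun _ => h)) (inner ℝ (φ (x₀ + h)) y : ℝ)) :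
    ∃ q : FormalMultilinearSeries ℝ X Y,
      ENNReal.ofReal R ≤ q.radius ∧
      ∀ h : X, ‖h‖ < R → x₀ + h ∈ U →
        HasSum (fun k => q k (fun _ => h)) (φ (x₀ + h)) := by
  classical
  choose p hpR hpsum using hweak
  obtain ⟨r₁, hr₁pos, hball₁⟩ := Metric.isOpen_iff.1 hU x₀ hx₀
  set r₀ : ℝ := min r₁ R with hr₀
  have hr₀pos : 0 < r₀ := lt_min hr₁pos hR
  have hr₀R : r₀ ≤ R := min_le_right _ _
  set fy : Y → X → ℝ := fun y x => (inner ℝ (φ x) y : ℝ) with hfy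
  -- each scalar function has a power series on the small ball
  have hball : ∀ y, HasFPowerSeriesOnBall (fy y) (p y) x₀ (ENNReal.ofReal r₀) := by
    intro y
    refine ⟨le_trans (ENNReal.ofReal_le_ofReal hr₀R) (hpR y), ENNReal.ofReal_pos.2 hr₀pos, ?_⟩
    intro z hz
    rw [EMetric.mem_ball, edist_lt_ofReal, dist_zero_right] at hz
    exact hpsum y z (lt_of_lt_of_le hz hr₀R)
      (hball₁ (by rw [Metric.mem_ball, dist_eq_norm, add_sub_cancel_left]
                  exact lt_of_lt_of_le hz (min_le_left _ _)))
  have hanal : ∀ y, AnalyticOnNhd ℝ (fy y) (Metric.eball x₀ (ENNReal.ofReal r₀)) :=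
    fun y => (hball y).analyticOnNhd
  -- Step 1 (Banach–Steinhaus induction): for each k, x in the ball, and tuple v, the map
  -- y ↦ iteratedFDeriv ℝ k (fy y) x v is a continuous linear functional of y.
  have key : ∀ (k : ℕ) (x : X), x ∈ Metric.eball x₀ (ENNReal.ofReal r₀) → ∀ v : Fin k → X,
      ∃ T : Y →L[ℝ] ℝ, ∀ y, T y = iteratedFDeriv ℝ k (fy y) x v := by
    intro k
    induction k with
    | zero =>
      intro x hx v
      refine ⟨innerSL ℝ (φ x), fun y => ?_⟩
      rw [iteratedFDeriv_zero_apply]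
      simp [hfy]
    | succ k ih =>
      intro x hx v
      have hdx : dist x x₀ < r₀ := by
        rw [EMetric.mem_ball, edist_lt_ofReal] at hx
        exact hx
      set v0 : X := v 0 with hv0
      set δ : ℝ := (r₀ - dist x x₀) / (2 * (‖v0‖ + 1)) with hδ
      have hδpos : 0 < δ := div_pos (by linarith) (by positivity)
      have hmem : ∀ s : ℝ, |s| ≤ δ → x + s • v0 ∈ Metric.eball x₀ (ENNReal.ofReal r₀) := by
        intro s hs
        rw [EMetric.mem_ball, edist_lt_ofReal]
        have h1 : dist (x + s • v0) x₀ ≤ ‖s • v0‖ + dist x x₀ :=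
          calc dist (x + s • v0) x₀ ≤ dist (x + s • v0) x + dist x x₀ := dist_triangle _ _ _
            _ = ‖s • v0‖ + dist x x₀ := by rw [dist_eq_norm, add_sub_cancel_left]
        have h2 : ‖s • v0‖ ≤ δ * (‖v0‖ + 1) := by
          rw [norm_smul, Real.norm_eq_abs]
          exact mul_le_mul hs (by linarith) (norm_nonneg _) hδpos.le
        have h3 : δ * (‖v0‖ + 1) = (r₀ - dist x x₀) / 2 := by
          rw [hδ]
          field_simp
        linarith
      set c : ℕ → ℝ := fun n => ((n : ℝ) + 1) / δ with hc
      have hcpos : ∀ n, 0 < c n := fun n => div_pos (by positivity) hδpos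
      have hcinv : ∀ n, |(c n)⁻¹| ≤ δ := by
        intro n
        rw [abs_of_nonneg (inv_nonneg.2 (hcpos n).le), hc]
        simp only [inv_div]
        exact div_le_self hδpos.le (by exact_mod_cast le_add_of_nonneg_left (Nat.cast_nonneg n))
      have hctend : Tendsto (fun n => ‖c n‖) atTop atTop := by
        have h1 : Tendsto (fun n : ℕ => ((n : ℝ) + 1)) atTop atTop :=
          tendsto_atTop_add_const_right _ _ tendsto_natCast_atTop_atTop
        have h2 : Tendsto c atTop atTop := h1.atTop_div_const hδpos
        exact h2.congr fun n => (Real.norm_of_nonneg (hcpos n).le).symm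
      choose T₁ hT₁ using fun n : ℕ => ih (x + (c n)⁻¹ • v0) (hmem _ (hcinv n)) (Fin.tail v)
      obtain ⟨T₀, hT₀⟩ := ih x hx (Fin.tail v)
      set S : ℕ → Y →L[ℝ] ℝ := fun n => c n • (T₁ n - T₀) with hS
      have htend : Tendsto (fun n y => S n y) atTop
          (𝓝 (fun y => iteratedFDeriv ℝ (k + 1) (fy y) x v)) := by
        rw [tendsto_pi_nhds]
        intro y
        have hdiffAt : DifferentiableAt ℝ (iteratedFDeriv ℝ k (fy y)) x :=
          (((hanal y).iteratedFDeriv k) x hx).differentiableAt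
        have hlim := hdiffAt.hasFDerivAt.lim v0 hctend
        have happ := ((ContinuousMultilinearMap.apply ℝ (fun _ : Fin k => X) ℝ
            (Fin.tail v)).continuous.tendsto _).comp hlim
        have hgoalval : (ContinuousMultilinearMap.apply ℝ (fun _ : Fin k => X) ℝ (Fin.tail v))
            ((fderiv ℝ (iteratedFDeriv ℝ k (fy y)) x) v0)
            = iteratedFDeriv ℝ (k + 1) (fy y) x v := by
          rw [ContinuousMultilinearMap.apply_apply, iteratedFDeriv_succ_apply_left]
        rw [← hgoalval]
        refine happ.congr fun n => ?_
        simp only [Function.comp_apply, ContinuousMultilinearMap.apply_apply, hS,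
          ContinuousLinearMap.smul_apply, ContinuousLinearMap.sub_apply,
          ContinuousMultilinearMap.smul_apply, ContinuousMultilinearMap.sub_apply,
          hT₁, hT₀, smul_eq_mul]
      exact ⟨continuousLinearMapOfTendsto S htend, fun y => rfl⟩
  have hx₀mem : x₀ ∈ Metric.eball x₀ (ENNReal.ofReal r₀) :=
    EMetric.mem_ball_self (ENNReal.ofReal_pos.2 hr₀pos)
  -- Step 2: for each k, the map y ↦ iteratedFDeriv ℝ k (fy y) x₀ is a continuous linear map
  -- into the space of continuous multilinear maps.
  have keyT : ∀ k : ℕ, ∃ T : Y →L[ℝ] ContinuousMultilinearMap ℝ (fun _ : Fin k => X) ℝ,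
      ∀ y, T y = iteratedFDeriv ℝ k (fy y) x₀ := by
    intro k
    choose e he using fun v : { v : Fin k → X // ∀ i, ‖v i‖ ≤ 1 } => key k x₀ hx₀mem v.1
    have hpt : ∀ y : Y, ∃ C, ∀ v : { v : Fin k → X // ∀ i, ‖v i‖ ≤ 1 }, ‖e v y‖ ≤ C := by
      intro y
      refine ⟨‖iteratedFDeriv ℝ k (fy y) x₀‖, fun v => ?_⟩
      rw [he v y]
      calc ‖iteratedFDeriv ℝ k (fy y) x₀ v.1‖
          ≤ ‖iteratedFDeriv ℝ k (fy y) x₀‖ * ∏ i, ‖v.1 i‖ :=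
            (iteratedFDeriv ℝ k (fy y) x₀).le_opNorm v.1
        _ ≤ ‖iteratedFDeriv ℝ k (fy y) x₀‖ :=
            mul_le_of_le_one_right (norm_nonneg _)
              (Finset.prod_le_one (fun i _ => norm_nonneg _) (fun i _ => v.2 i))
    obtain ⟨C, hC⟩ := banach_steinhaus hpt
    have hCnn : 0 ≤ C := le_trans (norm_nonneg _) (hC ⟨fun _ => 0, fun i => by simp⟩)
    refine ⟨LinearMap.mkContinuous
      { toFun := fun y => iteratedFDeriv ℝ k (fy y) x₀
        map_add' := ?_
        map_smul' := ?_ } C ?_, fun y => rfl⟩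
    · intro y z
      ext v
      obtain ⟨T, hT⟩ := key k x₀ hx₀mem v
      simp only [ContinuousMultilinearMap.add_apply]
      rw [← hT, ← hT, ← hT, map_add]
    · intro a y
      ext v
      obtain ⟨T, hT⟩ := key k x₀ hx₀mem v
      simp only [ContinuousMultilinearMap.smul_apply, RingHom.id_apply]
      rw [← hT, ← hT, map_smul, smul_eq_mul]
    · intro y
      refine mlnorm_le_of_unit _ (mul_nonneg hCnn (norm_nonneg _)) fun v hv => ?_
      have h1 : iteratedFDeriv ℝ k (fy y) x₀ v = e ⟨v, hv⟩ y := (he ⟨v, hv⟩ y).symm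
      rw [LinearMap.coe_mk, AddHom.coe_mk, h1]
      calc ‖e ⟨v, hv⟩ y‖ ≤ ‖e ⟨v, hv⟩‖ * ‖y‖ := (e ⟨v, hv⟩).le_opNorm y
        _ ≤ C * ‖y‖ := by gcongr; exact hC ⟨v, hv⟩
  choose T hT using keyT
  have hTb : ∀ (k : ℕ) (y : Y), ‖T k y‖ ≤ k.factorial * ‖p y k‖ := by
    intro k y
    rw [hT k y]
    exact cauchy_bound (hball y) k
  -- the candidate series
  set toDsymm : (Y →L[ℝ] ℝ) →L[ℝ] Y :=
    (InnerProductSpace.toDual ℝ Y).symm.toLinearIsometry.toContinuousLinearMap with htoD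
  have htoDnorm : ∀ L : Y →L[ℝ] ℝ, ‖toDsymm L‖ = ‖L‖ := fun L =>
    (InnerProductSpace.toDual ℝ Y).symm.norm_map L
  have htoDinner : ∀ (L : Y →L[ℝ] ℝ) (y : Y), (inner ℝ (toDsymm L) y : ℝ) = L y := fun L y =>
    InnerProductSpace.toDual_symm_apply
  set q : FormalMultilinearSeries ℝ X Y := fun k =>
    ((k.factorial : ℝ)⁻¹ • toDsymm).compContinuousMultilinearMap (T k).flipMultilinear with hq
  have hq_apply : ∀ (k : ℕ) (v : Fin k → X),
      q k v = (k.factorial : ℝ)⁻¹ • toDsymm ((T k).flipMultilinear v) := by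
    intro k v
    simp [hq]
  have hq_inner : ∀ (k : ℕ) (v : Fin k → X) (y : Y),
      (inner ℝ (q k v) y : ℝ) = (k.factorial : ℝ)⁻¹ * (T k y v) := by
    intro k v y
    rw [hq_apply, real_inner_smul_left, htoDinner]
    congr 1
  have hq_norm : ∀ (k : ℕ) (v : Fin k → X),
      ‖q k v‖ = (k.factorial : ℝ)⁻¹ * ‖(T k).flipMultilinear v‖ := by
    intro k v
    rw [hq_apply, norm_smul, htoDnorm, Real.norm_eq_abs, abs_of_nonneg (by positivity)]
  -- uniform bounds on ‖q k‖ * ρ ^ k for every ρ < R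
  have hbound : ∀ ρ : ℝ≥0, 0 < ρ → (ρ : ℝ) < R → ∃ C : ℝ, 0 ≤ C ∧
      ∀ k : ℕ, ‖q k‖ * (ρ : ℝ) ^ k ≤ C := by
    intro ρ hρpos hρR
    -- Banach–Steinhaus over all k and all unit tuples
    set ι := Σ k : ℕ, { v : Fin k → X // ∀ i, ‖v i‖ ≤ 1 } with hι
    set g : ι → Y →L[ℝ] ℝ := fun w =>
      ((ρ : ℝ) ^ w.1 * (w.1.factorial : ℝ)⁻¹) • ((T w.1).flipMultilinear w.2.1) with hg
    have hpt : ∀ y : Y, ∃ C, ∀ w : ι, ‖g w y‖ ≤ C := by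
      intro y
      have hrad : (ρ : ℝ≥0∞) < (p y).radius := by
        refine lt_of_lt_of_le ?_ (hpR y)
        rw [← ENNReal.ofReal_coe_nnreal]
        exact (ENNReal.ofReal_lt_ofReal_iff hR).2 hρR
      obtain ⟨C, hCpos, hCb⟩ := (p y).norm_mul_pow_le_of_lt_radius hrad
      refine ⟨C, fun w => ?_⟩
      obtain ⟨k, v, hv⟩ := w
      simp only [hg, ContinuousLinearMap.smul_apply, norm_smul, Real.norm_eq_abs]
      rw [ContinuousLinearMap.flipMultilinear_apply_apply]
      have h1 : ‖(T k y) v‖ ≤ k.factorial * ‖p y k‖ := by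
        calc ‖(T k y) v‖ ≤ ‖T k y‖ * ∏ i, ‖v i‖ := (T k y).le_opNorm v
          _ ≤ ‖T k y‖ :=
              mul_le_of_le_one_right (norm_nonneg _)
                (Finset.prod_le_one (fun i _ => norm_nonneg _) (fun i _ => hv i))
          _ ≤ k.factorial * ‖p y k‖ := hTb k y
      rw [abs_of_nonneg (show (0:ℝ) ≤ (ρ : ℝ) ^ k * (k.factorial : ℝ)⁻¹ by positivity)]
      calc (ρ : ℝ) ^ k * (k.factorial : ℝ)⁻¹ * ‖(T k y) v‖
          ≤ (ρ : ℝ) ^ k * (k.factorial : ℝ)⁻¹ * (k.factorial * ‖p y k‖) := by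
            gcongr
        _ = ‖p y k‖ * (ρ : ℝ) ^ k := by
            field_simp
        _ ≤ C := hCb k
    obtain ⟨C, hC⟩ := banach_steinhaus hpt
    have hCnn : 0 ≤ C := le_trans (norm_nonneg _) (hC ⟨0, ⟨fun _ => 0, fun i => by simp⟩⟩)
    refine ⟨C, hCnn, fun k => ?_⟩
    have hqk : ‖q k‖ ≤ C / (ρ : ℝ) ^ k := by
      refine mlnorm_le_of_unit _ (div_nonneg hCnn (by positivity)) fun v hv => ?_
      have hgk : ‖g ⟨k, v, hv⟩‖ ≤ C := hC ⟨k, v, hv⟩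
      have h1 : ‖q k v‖ * (ρ : ℝ) ^ k = ‖g ⟨k, v, hv⟩‖ := by
        rw [hq_norm]
        show _ = ‖((ρ : ℝ) ^ k * (k.factorial : ℝ)⁻¹) • (T k).flipMultilinear v‖
        rw [norm_smul, Real.norm_eq_abs,
          abs_of_nonneg (show (0:ℝ) ≤ (ρ : ℝ) ^ k * (k.factorial : ℝ)⁻¹ by positivity)]
        ring
      have h2 : ‖q k v‖ * (ρ : ℝ) ^ k ≤ C := h1 ▸ hgk
      rw [le_div_iff₀ (by positivity)]
      exact h2
    rw [← le_div_iff₀ (by positivity)]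
    exact hqk
  refine ⟨q, ?_, ?_⟩
  · -- radius bound
    refine ENNReal.le_of_forall_nnreal_lt fun ρ hρ => ?_
    rcases eq_or_lt_of_le (zero_le : (0 : ℝ≥0) ≤ ρ) with h0 | hρpos
    · simp [← h0]
    · have hρR : (ρ : ℝ) < R := by
        have h2 := (ENNReal.lt_ofReal_iff_toReal_lt ENNReal.coe_ne_top).1 hρ
        simpa using h2
      obtain ⟨C, hCnn, hCb⟩ := hbound ρ hρpos hρR
      exact q.le_radius_of_bound C hCb
  · -- the sum converges to φ
    intro h hhR hhU
    obtain ⟨ρ', hρ'1, hρ'2⟩ := exists_between hhR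
    have hρ'nn : 0 ≤ ρ' := le_trans (norm_nonneg h) hρ'1.le
    set ρ : ℝ≥0 := ρ'.toNNReal with hρdef
    have hρpos : 0 < ρ := Real.toNNReal_pos.2 (lt_of_le_of_lt (norm_nonneg h) hρ'1)
    have hρR : (ρ : ℝ) < R := by
      rw [hρdef, Real.coe_toNNReal _ hρ'nn]
      exact hρ'2
    have hρh : ‖h‖ < (ρ : ℝ) := by
      rw [hρdef, Real.coe_toNNReal _ hρ'nn]
      exact hρ'1
    obtain ⟨C, hCnn, hCb⟩ := hbound ρ hρpos hρR
    -- summability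
    have hsummable : Summable fun k => q k fun _ => h := by
      apply Summable.of_norm
      have hb : ∀ k : ℕ, ‖q k fun _ => h‖ ≤ C * (‖h‖ / (ρ : ℝ)) ^ k := by
        intro k
        calc ‖q k fun _ => h‖ ≤ ‖q k‖ * ∏ _i : Fin k, ‖h‖ := (q k).le_opNorm _
          _ = ‖q k‖ * ‖h‖ ^ k := by rw [Finset.prod_const, Finset.card_univ, Fintype.card_fin]
          _ = (‖q k‖ * (ρ : ℝ) ^ k) * (‖h‖ / (ρ : ℝ)) ^ k := by
              have hρne : ((ρ : ℝ)) ≠ 0 := by positivity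
              rw [div_pow, mul_assoc, mul_div_assoc', mul_div_cancel_left₀ _ (pow_ne_zero k hρne)]
          _ ≤ C * (‖h‖ / (ρ : ℝ)) ^ k := by
              gcongr
              exact hCb k
      refine Summable.of_nonneg_of_le (fun k => norm_nonneg _) hb ?_
      apply Summable.mul_left
      apply summable_geometric_of_lt_one (by positivity)
      rw [div_lt_one (by positivity)]
      exact hρh
    obtain ⟨ψ, hψ⟩ := hsummable
    have hψeq : ψ = φ (x₀ + h) := by
      refine ext_inner_right ℝ fun y => ?_
      have h1 : HasSum (fun k => (inner ℝ (q k fun _ => h) y : ℝ)) (inner ℝ ψ y : ℝ) := by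
        have := (innerSL ℝ y).hasSum hψ
        have h2 : ∀ z : Y, (innerSL ℝ y) z = (inner ℝ z y : ℝ) := fun z => by simp only [innerSL_apply_apply]; exact real_inner_comm z y
        simpa only [h2] using this
      have h3 : ∀ k : ℕ, (inner ℝ (q k fun _ => h) y : ℝ) = p y k fun _ => h := by
        intro k
        rw [hq_inner, hT k y]
        have h4 := (hball y).factorial_smul h k
        have h5 : (k.factorial : ℝ) • (p y k fun _ => h)
            = iteratedFDeriv ℝ k (fy y) x₀ fun _ => h := by
          rw [← h4, Nat.cast_smul_eq_nsmul ℝ]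
        rw [← h5, smul_eq_mul]
        rw [inv_mul_cancel_left₀]
        exact_mod_cast k.factorial_ne_zero
      have h1' : HasSum (fun k => (p y k fun _ => h : ℝ)) (inner ℝ ψ y : ℝ) := by
        simpa only [h3] using h1
      have h6 := hpsum y h hhR hhU
      exact h1'.unique h6
    rw [← hψeq]
    exact hψ
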